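/- (Monotonicity of a row update.) Assume λ > 0, fix a mode n and a row index i_n ∈ {1,…,I_n}, and let A'^(n) be obtained from A^(n) by replacing its i_n-th row with a* = (B^{(n)}_{i_n} + λ I_{J_n})^{-1} c^{(n)}_{i_n}, leaving all other rows unchanged. Then L(G, A^(1),…, A'^(n), …, A^(N)) ≤ L(G, A^(1),…, A^(n), …, A^(N)); the row-wise update never increases the Tucker loss. -/

import Mathlib

open Finset Matrix

/-- The Tucker loss (Equation (7)):
`L(G, A⁽¹⁾,…,A⁽ᴺ⁾) = ∑_{i∈Ω} (X_i − ∑_j G_j ∏_n A⁽ⁿ⁾_{iₙ jₙ})² + λ ∑_n ‖A⁽ⁿ⁾‖_F²`. -/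
noncomputable def tuckerLoss {N : ℕ} (I J : Fin N → ℕ)
    (Ω : Finset ((k : Fin N) → Fin (I k)))
    (X : ((k : Fin N) → Fin (I k)) → ℝ)
    (G : ((k : Fin N) → Fin (J k)) → ℝ)
    (A : (n : Fin N) → Matrix (Fin (I n)) (Fin (J n)) ℝ)
    (lam : ℝ) : ℝ :=
  (∑ i ∈ Ω,
      (X i - ∑ j : (k : Fin N) → Fin (J k), G j * ∏ n, A n (i n) (j n)) ^ 2)
    + lam * ∑ n, ∑ p, ∑ q, A n p q ^ 2

/-- The vector `δ⁽ⁿ⁾_i ∈ ℝ^{Jₙ}` (Equation (10)):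
`δ⁽ⁿ⁾_i(j) = ∑_{j' : j'ₙ = j} G_{j'} ∏_{k≠n} A⁽ᵏ⁾_{iₖ j'ₖ}`. -/
noncomputable def deltaVec {N : ℕ} (I J : Fin N → ℕ)
    (G : ((k : Fin N) → Fin (J k)) → ℝ)
    (A : (n : Fin N) → Matrix (Fin (I n)) (Fin (J n)) ℝ)
    (n : Fin N) (i : (k : Fin N) → Fin (I k)) : Fin (J n) → ℝ :=
  fun j =>
    ∑ j' ∈ Finset.univ.filter (fun j' : (k : Fin N) → Fin (J k) => j' n = j),
      G j' * ∏ k ∈ Finset.univ.erase n, A k (i k) (j' k)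

/-- The matrix `B⁽ⁿ⁾_{iₙ} ∈ ℝ^{Jₙ×Jₙ}` (Equation (8)), whose `(j₁,j₂)` entry is
`∑_{i ∈ Ω⁽ⁿ⁾_{iₙ}} δ⁽ⁿ⁾_i(j₁) δ⁽ⁿ⁾_i(j₂)`. -/
noncomputable def Bmat {N : ℕ} (I J : Fin N → ℕ)
    (Ω : Finset ((k : Fin N) → Fin (I k)))
    (G : ((k : Fin N) → Fin (J k)) → ℝ)
    (A : (n : Fin N) → Matrix (Fin (I n)) (Fin (J n)) ℝ)
    (n : Fin N) (r : Fin (I n)) : Matrix (Fin (J n)) (Fin (J n)) ℝ :=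
  fun j1 j2 =>
    ∑ i ∈ Ω.filter (fun i => i n = r),
      deltaVec I J G A n i j1 * deltaVec I J G A n i j2

/-- The vector `c⁽ⁿ⁾_{iₙ} ∈ ℝ^{Jₙ}` (Equation (9)), whose `j`th entry is
`∑_{i ∈ Ω⁽ⁿ⁾_{iₙ}} X_i δ⁽ⁿ⁾_i(j)`. -/
noncomputable def cvec {N : ℕ} (I J : Fin N → ℕ)
    (Ω : Finset ((k : Fin N) → Fin (I k)))
    (X : ((k : Fin N) → Fin (I k)) → ℝ)
    (G : ((k : Fin N) → Fin (J k)) → ℝ)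
    (A : (n : Fin N) → Matrix (Fin (I n)) (Fin (J n)) ℝ)
    (n : Fin N) (r : Fin (I n)) : Fin (J n) → ℝ :=
  fun j => ∑ i ∈ Ω.filter (fun i => i n = r), X i * deltaVec I J G A n i j

/-! With every factor other than row `r` of `A⁽ⁿ⁾` held fixed, the Tucker loss differs from the
ridge-regression objective `F(a) = ∑_{i ∈ Ω⁽ⁿ⁾_r} (X_i − a ⬝ δ⁽ⁿ⁾_i)² + λ‖a‖²` of that row by a
constant: the model entry at `i` is `A⁽ⁿ⁾_{iₙ} ⬝ δ⁽ⁿ⁾_i`, and `δ⁽ⁿ⁾_i` does not involve `A⁽ⁿ⁾`.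
The matrix `B⁽ⁿ⁾_r + λI` is positive definite, so `a*` solves the normal equations
`(B⁽ⁿ⁾_r + λI) a* = c⁽ⁿ⁾_r`, and then `F(a* + v) = F(a*) + ∑ (v ⬝ δ⁽ⁿ⁾_i)² + λ‖v‖² ≥ F(a*)`. -/

namespace Ridge

variable {ι m : Type*} (s : Finset ι) (x : ι → ℝ) (d : ι → m → ℝ)

def gram : Matrix m m ℝ :=
  of fun j₁ j₂ => ∑ i ∈ s, d i j₁ * d i j₂

def moment : m → ℝ :=
  fun j => ∑ i ∈ s, x i * d i j

lemma gram_eq_sum_vecMulVec : gram s d = ∑ i ∈ s, vecMulVec (d i) (d i) := by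
  ext j₁ j₂
  simp [gram, Matrix.sum_apply, vecMulVec_apply]

variable [Fintype m]

noncomputable def loss (lam : ℝ) (a : m → ℝ) : ℝ :=
  ∑ i ∈ s, (x i - a ⬝ᵥ d i) ^ 2 + lam * ∑ q, a q ^ 2

lemma posSemidef_gram : (gram s d).PosSemidef := by
  rw [gram_eq_sum_vecMulVec]
  exact posSemidef_sum s fun i _ => by simpa using posSemidef_vecMulVec_self_star (d i)

lemma posDef_gram_add_smul_one [DecidableEq m] {lam : ℝ} (hlam : 0 < lam) :
    (gram s d + lam • (1 : Matrix m m ℝ)).PosDef :=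
  PosDef.posSemidef_add (posSemidef_gram s d) (PosDef.one.smul hlam)

lemma dotProduct_gram_mulVec (v w : m → ℝ) :
    v ⬝ᵥ (gram s d *ᵥ w) = ∑ i ∈ s, (v ⬝ᵥ d i) * (w ⬝ᵥ d i) := by
  simp only [gram_eq_sum_vecMulVec, sum_mulVec, vecMulVec_mulVec, dotProduct_sum,
    dotProduct_smul, op_smul_eq_mul, dotProduct_comm w]

lemma dotProduct_moment (v : m → ℝ) :
    v ⬝ᵥ moment s x d = ∑ i ∈ s, x i * (v ⬝ᵥ d i) := by
  simp only [moment, dotProduct, Finset.mul_sum]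
  rw [Finset.sum_comm]
  exact Finset.sum_congr rfl fun _ _ => Finset.sum_congr rfl fun _ _ => by ring

lemma loss_add [DecidableEq m] (lam : ℝ) (a v : m → ℝ) :
    loss s x d lam (a + v) = loss s x d lam a + ∑ i ∈ s, (v ⬝ᵥ d i) ^ 2
      + lam * ∑ q, v q ^ 2 + 2 * (v ⬝ᵥ ((gram s d + lam • 1) *ᵥ a - moment s x d)) := by
  have hdata : ∑ i ∈ s, (x i - (a + v) ⬝ᵥ d i) ^ 2 = ∑ i ∈ s, (x i - a ⬝ᵥ d i) ^ 2
      + ∑ i ∈ s, (v ⬝ᵥ d i) ^ 2 + 2 * ∑ i ∈ s, (v ⬝ᵥ d i) * (a ⬝ᵥ d i)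
      - 2 * ∑ i ∈ s, x i * (v ⬝ᵥ d i) := by
    simp only [Finset.mul_sum, ← Finset.sum_add_distrib, ← Finset.sum_sub_distrib, add_dotProduct]
    exact Finset.sum_congr rfl fun _ _ => by ring
  have hreg : ∑ q, (a + v) q ^ 2 = ∑ q, a q ^ 2 + ∑ q, v q ^ 2 + 2 * (v ⬝ᵥ a) := by
    simp only [dotProduct, Finset.mul_sum, ← Finset.sum_add_distrib, Pi.add_apply]
    exact Finset.sum_congr rfl fun _ _ => by ring
  rw [loss, loss, hdata, hreg, dotProduct_sub, add_mulVec, dotProduct_add, smul_mulVec,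
    one_mulVec, dotProduct_smul, dotProduct_gram_mulVec, dotProduct_moment, smul_eq_mul]
  ring

lemma loss_le_of_normal_eq [DecidableEq m] {lam : ℝ} (hlam : 0 ≤ lam) {a : m → ℝ}
    (ha : (gram s d + lam • 1) *ᵥ a = moment s x d) (b : m → ℝ) :
    loss s x d lam a ≤ loss s x d lam b := by
  have hexp := loss_add s x d lam a (b - a)
  rw [add_sub_cancel, ha, sub_self, dotProduct_zero] at hexp
  have : 0 ≤ ∑ i ∈ s, ((b - a) ⬝ᵥ d i) ^ 2 := Finset.sum_nonneg fun _ _ => sq_nonneg _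
  have : 0 ≤ ∑ q, (b - a) q ^ 2 := Finset.sum_nonneg fun _ _ => sq_nonneg _
  nlinarith

lemma loss_inv_mulVec_moment_le [DecidableEq m] {lam : ℝ} (hlam : 0 < lam) (b : m → ℝ) :
    loss s x d lam ((gram s d + lam • 1)⁻¹ *ᵥ moment s x d) ≤ loss s x d lam b := by
  refine loss_le_of_normal_eq s x d hlam.le ?_ b
  have hunit := (isUnit_iff_isUnit_det _).mp (posDef_gram_add_smul_one s d hlam).isUnit
  rw [mulVec_mulVec, mul_nonsing_inv _ hunit, one_mulVec]

end Ridge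

section Tucker

variable {N : ℕ} {I J : Fin N → ℕ} (G : ((k : Fin N) → Fin (J k)) → ℝ)
  (A : (n : Fin N) → Matrix (Fin (I n)) (Fin (J n)) ℝ)

lemma sum_mul_prod_eq_dotProduct_deltaVec (n : Fin N) (i : (k : Fin N) → Fin (I k)) :
    ∑ j : (k : Fin N) → Fin (J k), G j * ∏ k, A k (i k) (j k)
      = A n (i n) ⬝ᵥ deltaVec I J G A n i := by
  rw [← Finset.sum_fiberwise Finset.univ (fun j : (k : Fin N) → Fin (J k) => j n)]
  refine Finset.sum_congr rfl fun jn _ => ?_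
  rw [deltaVec, Finset.mul_sum]
  refine Finset.sum_congr rfl fun j hj => ?_
  rw [← Finset.mul_prod_erase Finset.univ _ (Finset.mem_univ n), (Finset.mem_filter.mp hj).2]
  ring

lemma deltaVec_update_self (n : Fin N) (M : Matrix (Fin (I n)) (Fin (J n)) ℝ)
    (i : (k : Fin N) → Fin (I k)) :
    deltaVec I J G (Function.update A n M) n i = deltaVec I J G A n i := by
  funext j
  refine Finset.sum_congr rfl fun j' _ => congrArg _ <| Finset.prod_congr rfl fun k hk => ?_
  rw [Function.update_of_ne (Finset.ne_of_mem_erase hk)]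

lemma Bmat_eq_gram (Ω : Finset ((k : Fin N) → Fin (I k))) (n : Fin N) (r : Fin (I n)) :
    Bmat I J Ω G A n r = Ridge.gram (Ω.filter (fun i => i n = r)) (deltaVec I J G A n) :=
  rfl

lemma cvec_eq_moment (Ω : Finset ((k : Fin N) → Fin (I k)))
    (X : ((k : Fin N) → Fin (I k)) → ℝ) (n : Fin N) (r : Fin (I n)) :
    cvec I J Ω X G A n r = Ridge.moment (Ω.filter (fun i => i n = r)) X (deltaVec I J G A n) :=
  rfl

lemma sum_sq_updateRow_sub {p q : Type*} [Fintype p] [Fintype q] [DecidableEq p]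
    (M : Matrix p q ℝ) (r : p) (a b : q → ℝ) :
    ∑ i, ∑ j, M.updateRow r a i j ^ 2 - ∑ i, ∑ j, M.updateRow r b i j ^ 2
      = ∑ j, a j ^ 2 - ∑ j, b j ^ 2 := by
  rw [← Finset.sum_sub_distrib, Fintype.sum_eq_single r fun i hi => by
    simp only [updateRow_ne hi, sub_self]]
  simp only [updateRow_self]

lemma tuckerLoss_updateRow_sub (Ω : Finset ((k : Fin N) → Fin (I k)))
    (X : ((k : Fin N) → Fin (I k)) → ℝ) (lam : ℝ) (n : Fin N) (r : Fin (I n))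
    (a b : Fin (J n) → ℝ) :
    tuckerLoss I J Ω X G (Function.update A n ((A n).updateRow r a)) lam
        - tuckerLoss I J Ω X G (Function.update A n ((A n).updateRow r b)) lam
      = Ridge.loss (Ω.filter (fun i => i n = r)) X (deltaVec I J G A n) lam a
        - Ridge.loss (Ω.filter (fun i => i n = r)) X (deltaVec I J G A n) lam b := by
  have hpred : ∀ (c : Fin (J n) → ℝ) (i : (k : Fin N) → Fin (I k)),
      ∑ j : (k : Fin N) → Fin (J k), G j * ∏ k,
          Function.update A n ((A n).updateRow r c) k (i k) (j k)
        = (A n).updateRow r c (i n) ⬝ᵥ deltaVec I J G A n i := fun c i => by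
    rw [sum_mul_prod_eq_dotProduct_deltaVec _ _ n, deltaVec_update_self, Function.update_self]
  have hdata : ∑ i ∈ Ω, (X i - (A n).updateRow r a (i n) ⬝ᵥ deltaVec I J G A n i) ^ 2
        - ∑ i ∈ Ω, (X i - (A n).updateRow r b (i n) ⬝ᵥ deltaVec I J G A n i) ^ 2
      = ∑ i ∈ Ω.filter (fun i => i n = r), (X i - a ⬝ᵥ deltaVec I J G A n i) ^ 2
        - ∑ i ∈ Ω.filter (fun i => i n = r), (X i - b ⬝ᵥ deltaVec I J G A n i) ^ 2 := by
    rw [← Finset.sum_sub_distrib, ← Finset.sum_sub_distrib, ← Finset.sum_filter_of_ne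
      fun i _ hi => by_contra fun hir => hi <| by rw [updateRow_ne hir, updateRow_ne hir, sub_self]]
    refine Finset.sum_congr rfl fun i hi => ?_
    rw [(Finset.mem_filter.mp hi).2, updateRow_self, updateRow_self]
  have hreg : ∑ m, ∑ p, ∑ q, Function.update A n ((A n).updateRow r a) m p q ^ 2
      - ∑ m, ∑ p, ∑ q, Function.update A n ((A n).updateRow r b) m p q ^ 2
      = ∑ q, a q ^ 2 - ∑ q, b q ^ 2 := by
    rw [← Finset.sum_sub_distrib, Fintype.sum_eq_single n fun m hm => by
      simp only [Function.update_of_ne hm, sub_self]]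
    simp only [Function.update_self, sum_sq_updateRow_sub]
  simp only [tuckerLoss, Ridge.loss, hpred]
  linear_combination hdata + lam * hreg

end Tucker

theorem ptucker_row_update_monotone_general
    (N : ℕ) (I J : Fin N → ℕ)
    (Ω : Finset ((k : Fin N) → Fin (I k)))
    (X : ((k : Fin N) → Fin (I k)) → ℝ)
    (G : ((k : Fin N) → Fin (J k)) → ℝ)
    (A : (n : Fin N) → Matrix (Fin (I n)) (Fin (J n)) ℝ)
    (lam : ℝ) (hlam : 0 < lam) (n : Fin N) (r : Fin (I n))
    (astar : Fin (J n) → ℝ)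
    (hastar : astar =
      (Bmat I J Ω G A n r + lam • (1 : Matrix (Fin (J n)) (Fin (J n)) ℝ))⁻¹.mulVec
        (cvec I J Ω X G A n r))
    (A' : (n : Fin N) → Matrix (Fin (I n)) (Fin (J n)) ℝ)
    (hA' : A' = Function.update A n ((A n).updateRow r astar)) :
    tuckerLoss I J Ω X G A' lam ≤ tuckerLoss I J Ω X G A lam := by
  have hA : Function.update A n ((A n).updateRow r (A n r)) = A := by simp
  have hsub := tuckerLoss_updateRow_sub G A Ω X lam n r astar (A n r)
  rw [hA, ← hA'] at hsub
  rw [Bmat_eq_gram, cvec_eq_moment] at hastar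
  have hmin := Ridge.loss_inv_mulVec_moment_le (Ω.filter (fun i => i n = r)) X
    (deltaVec I J G A n) hlam (A n r)
  rw [← hastar] at hmin
  linarith

/-- Monotonicity of a row update: for `λ > 0`, replacing the `r`-th row of
`A⁽ⁿ⁾` by `a* = (B⁽ⁿ⁾_r + λ I)⁻¹ c⁽ⁿ⁾_r` never increases the Tucker loss. -/
theorem ptucker_row_update_monotone
    (N : ℕ) (hN : 0 < N) (I J : Fin N → ℕ) (hI : ∀ k, 0 < I k) (hJ : ∀ k, 0 < J k)
    (Ω : Finset ((k : Fin N) → Fin (I k)))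
    (X : ((k : Fin N) → Fin (I k)) → ℝ)
    (G : ((k : Fin N) → Fin (J k)) → ℝ)
    (A : (n : Fin N) → Matrix (Fin (I n)) (Fin (J n)) ℝ)
    (lam : ℝ) (hlam : 0 < lam) (n : Fin N) (r : Fin (I n))
    (astar : Fin (J n) → ℝ)
    (hastar : astar =
      (Bmat I J Ω G A n r + lam • (1 : Matrix (Fin (J n)) (Fin (J n)) ℝ))⁻¹.mulVec
        (cvec I J Ω X G A n r))
    (A' : (n : Fin N) → Matrix (Fin (I n)) (Fin (J n)) ℝ)
    (hA' : A' = Function.update A n ((A n).updateRow r astar)) :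
    tuckerLoss I J Ω X G A' lam ≤ tuckerLoss I J Ω X G A lam :=
  ptucker_row_update_monotone_general N I J Ω X G A lam hlam n r astar hastar A' hA'
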